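/- With ρ, χ, f₀ as in the setup and ζ(n) := f₀(n)·Σ_{j=1}^{n} 1/(f₀(j−1)·f₀(j)), define for integers m ≥ 1 and n ≥ 0 the Green function G(m,n) := 2iρ·(χ(m)/m)·( f₀(m)·ζ(n) if n ≤ m, and f₀(n)·ζ(m) if n ≥ m ). Then for every m ≥ 1: G(m,0) = 0, and G(m,n) satisfies, for every n ≥ 1, (1/χ(n))·( G(m,n) + (i·n/(2ρ))·( G(m,n+1) + 2G(m,n) + G(m,n−1) ) ) − G(m,n) = δ_{m,n}, where δ_{m,n} is 1 if m = n and 0 otherwise. -/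

import Mathlib

noncomputable section

/-- The second solution `ζ(n) = f₀(n)·Σ_{j=1}^{n} 1/(f₀(j-1)·f₀(j))` obtained from `f₀`
by reduction of order. -/
def zetaSeq (f₀ : ℕ → ℂ) (n : ℕ) : ℂ :=
  f₀ n * ∑ j ∈ Finset.Icc 1 n, 1 / (f₀ (j - 1) * f₀ j)

/-- The Green function `G(m,n) = 2iρ·(χ(m)/m)·(f₀(m)ζ(n)` if `n ≤ m`, `f₀(n)ζ(m)` if
`n ≥ m)`. -/
def greenFun (ρ : ℝ) (χ : ℕ → ℂ) (f₀ : ℕ → ℂ) (m n : ℕ) : ℂ :=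
  2 * Complex.I * ρ * (χ m / m) *
    (if n ≤ m then f₀ m * zetaSeq f₀ n else f₀ n * zetaSeq f₀ m)

lemma zetaSeq_succ (f₀ : ℕ → ℂ) (n : ℕ) :
    zetaSeq f₀ (n+1) = f₀ (n+1) *
      ((∑ j ∈ Finset.Icc 1 n, 1 / (f₀ (j - 1) * f₀ j)) + 1 / (f₀ n * f₀ (n+1))) := by
  unfold zetaSeq
  rw [Finset.sum_Icc_succ_top (by omega)]
  norm_num

lemma wronskian (f₀ : ℕ → ℂ) (hne : ∀ n, f₀ n ≠ 0) (n : ℕ) :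
    f₀ n * zetaSeq f₀ (n+1) - f₀ (n+1) * zetaSeq f₀ n = 1 := by
  have h0 := hne n
  have h1 := hne (n+1)
  rw [zetaSeq_succ]
  unfold zetaSeq
  field_simp
  ring

lemma zeta_sum (f₀ : ℕ → ℂ) (hne : ∀ n, f₀ n ≠ 0) (k : ℕ) :
    zetaSeq f₀ (k+2) + 2 * zetaSeq f₀ (k+1) + zetaSeq f₀ k =
      (∑ j ∈ Finset.Icc 1 (k+1), 1 / (f₀ (j - 1) * f₀ j)) *
        (f₀ (k+2) + 2 * f₀ (k+1) + f₀ k) := by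
  have h0 := hne k
  have h1 := hne (k+1)
  have h2 := hne (k+2)
  have e2 : zetaSeq f₀ (k+1+1) = _ := zetaSeq_succ f₀ (k+1)
  rw [show k+2 = k+1+1 from rfl, e2, zetaSeq_succ f₀ k,
    Finset.sum_Icc_succ_top (show 1 ≤ k+1 by omega)]
  unfold zetaSeq
  norm_num
  field_simp
  ring

lemma key_rec (ρ : ℝ) (hρ : ρ ≠ 0) (χ : ℕ → ℂ) (hχ : ∀ n, χ n ≠ 0)
    (f₀ : ℕ → ℂ)
    (hDS : ∀ n : ℕ, 1 ≤ n →
      (1 / χ n) * (f₀ n + (Complex.I * n / (2 * ρ)) *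
        (f₀ (n + 1) + 2 * f₀ n + f₀ (n - 1))) = f₀ n) (k : ℕ) :
    Complex.I * ((k : ℂ) + 1) / (2 * ρ) * (f₀ (k+2) + 2 * f₀ (k+1) + f₀ k) =
      (χ (k+1) - 1) * f₀ (k+1) := by
  have h := hDS (k+1) (by omega)
  have hc := hχ (k+1)
  have hρ' : (ρ : ℂ) ≠ 0 := by exact_mod_cast hρ
  simp only [Nat.add_sub_cancel] at h
  push_cast at h
  field_simp at h ⊢
  linear_combination h

lemma zeta_rec (ρ : ℝ) (hρ : ρ ≠ 0) (χ : ℕ → ℂ) (hχ : ∀ n, χ n ≠ 0)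
    (f₀ : ℕ → ℂ) (hne : ∀ n, f₀ n ≠ 0)
    (hDS : ∀ n : ℕ, 1 ≤ n →
      (1 / χ n) * (f₀ n + (Complex.I * n / (2 * ρ)) *
        (f₀ (n + 1) + 2 * f₀ n + f₀ (n - 1))) = f₀ n) (k : ℕ) :
    Complex.I * ((k : ℂ) + 1) / (2 * ρ) *
        (zetaSeq f₀ (k+2) + 2 * zetaSeq f₀ (k+1) + zetaSeq f₀ k) =
      (χ (k+1) - 1) * zetaSeq f₀ (k+1) := by
  have hkey := key_rec ρ hρ χ hχ f₀ hDS k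
  rw [zeta_sum f₀ hne k]
  have hz : zetaSeq f₀ (k+1) =
      f₀ (k+1) * ∑ j ∈ Finset.Icc 1 (k+1), 1 / (f₀ (j - 1) * f₀ j) := rfl
  rw [hz]
  linear_combination (∑ j ∈ Finset.Icc 1 (k+1), 1 / (f₀ (j - 1) * f₀ j)) * hkey

lemma homogCase (χn c w z0 z1 z2 : ℂ) (hχn : χn ≠ 0)
    (hrec : c * (z2 + 2*z1 + z0) = (χn - 1) * z1) :
    (1/χn) * (w*z1 + c*(w*z2 + 2*(w*z1) + w*z0)) - w*z1 = 0 := by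
  field_simp
  linear_combination w * hrec

lemma deltaCase (χn c w z0 z1 z2 f1 f2 : ℂ) (hχn : χn ≠ 0)
    (hrec : c * (z2 + 2*z1 + z0) = (χn - 1) * z1)
    (hW : f1*z2 - f2*z1 = 1)
    (hcw : c * w = -χn) :
    (1/χn) * (w*(f1*z1) + c*(w*(f2*z1) + 2*(w*(f1*z1)) + w*(f1*z0))) - w*(f1*z1) = 1 := by
  field_simp
  linear_combination (w*f1)*hrec - (c*w)*hW - hcw

/-- the Green function satisfies `G(m,0) = 0` and
`((𝒜₀ - I)G(m,·))(n) = δ_{m,n}` for all `m, n ≥ 1`. -/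
theorem stmt13 (ρ : ℝ) (hρ : ρ ≠ 0) (χ : ℕ → ℂ) (hχ : ∀ n, χ n ≠ 0)
    (f₀ : ℕ → ℂ) (hf₀0 : f₀ 0 = 1) (hf₀ne : ∀ n, f₀ n ≠ 0)
    (hDS : ∀ n : ℕ, 1 ≤ n →
      (1 / χ n) * (f₀ n + (Complex.I * n / (2 * ρ)) *
        (f₀ (n + 1) + 2 * f₀ n + f₀ (n - 1))) = f₀ n) :
    ∀ m : ℕ, 1 ≤ m →
      greenFun ρ χ f₀ m 0 = 0 ∧
      ∀ n : ℕ, 1 ≤ n →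
        (1 / χ n) * (greenFun ρ χ f₀ m n + (Complex.I * n / (2 * ρ)) *
            (greenFun ρ χ f₀ m (n + 1) + 2 * greenFun ρ χ f₀ m n +
              greenFun ρ χ f₀ m (n - 1))) - greenFun ρ χ f₀ m n =
          if m = n then 1 else 0 := by
  intro m hm
  have hρ' : (ρ : ℂ) ≠ 0 := by exact_mod_cast hρ
  have hm' : ((m : ℂ)) ≠ 0 := Nat.cast_ne_zero.mpr (by omega)
  constructor
  · simp [greenFun, zetaSeq, show (0:ℕ) ≤ m by omega]
  · intro n hn
    obtain ⟨k, rfl⟩ : ∃ k, n = k + 1 := ⟨n - 1, by omega⟩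
    simp only [Nat.add_sub_cancel]
    have hc := hχ (k+1)
    have castk : ((k+1 : ℕ) : ℂ) = (k : ℂ) + 1 := by push_cast; ring
    have hk1 : ((k : ℂ) + 1) ≠ 0 := by
      rw [← castk]; exact Nat.cast_ne_zero.mpr (by omega)
    have hkeyD := key_rec ρ hρ χ hχ f₀ hDS k
    have hrecD := zeta_rec ρ hρ χ hχ f₀ hf₀ne hDS k
    rcases lt_trichotomy m (k+1) with hlt | heq | hgt
    · -- n > m
      have e0 : greenFun ρ χ f₀ m k =
          2 * Complex.I * ρ * (χ m / m) * (f₀ k * zetaSeq f₀ m) := by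
        unfold greenFun
        by_cases h : k ≤ m
        · rw [if_pos h]
          have hk : k = m := by omega
          subst hk; ring
        · rw [if_neg h]
      have e1 : greenFun ρ χ f₀ m (k+1) =
          2 * Complex.I * ρ * (χ m / m) * (f₀ (k+1) * zetaSeq f₀ m) := by
        unfold greenFun; rw [if_neg (by omega)]
      have e2 : greenFun ρ χ f₀ m (k+1+1) =
          2 * Complex.I * ρ * (χ m / m) * (f₀ (k+2) * zetaSeq f₀ m) := by
        unfold greenFun; rw [if_neg (by omega)]
      rw [e0, e1, e2, if_neg (by omega), castk]
      have hrec' : Complex.I * ((k : ℂ) + 1) / (2 * ρ) *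
          (f₀ (k+2) * zetaSeq f₀ m + 2 * (f₀ (k+1) * zetaSeq f₀ m) + f₀ k * zetaSeq f₀ m) =
          (χ (k+1) - 1) * (f₀ (k+1) * zetaSeq f₀ m) := by
        linear_combination (zetaSeq f₀ m) * hkeyD
      linear_combination homogCase (χ (k+1)) (Complex.I * ((k : ℂ) + 1) / (2 * ρ))
        (2 * Complex.I * ρ * (χ m / m)) (f₀ k * zetaSeq f₀ m) (f₀ (k+1) * zetaSeq f₀ m)
        (f₀ (k+2) * zetaSeq f₀ m) hc hrec'
    · -- n = m : delta
      subst heq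
      have e0 : greenFun ρ χ f₀ (k+1) k =
          2 * Complex.I * ρ * (χ (k+1) / ((k : ℂ)+1)) * (f₀ (k+1) * zetaSeq f₀ k) := by
        unfold greenFun; rw [if_pos (by omega), castk]
      have e1 : greenFun ρ χ f₀ (k+1) (k+1) =
          2 * Complex.I * ρ * (χ (k+1) / ((k : ℂ)+1)) * (f₀ (k+1) * zetaSeq f₀ (k+1)) := by
        unfold greenFun; rw [if_pos (by omega), castk]
      have e2 : greenFun ρ χ f₀ (k+1) (k+1+1) =
          2 * Complex.I * ρ * (χ (k+1) / ((k : ℂ)+1)) * (f₀ (k+2) * zetaSeq f₀ (k+1)) := by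
        unfold greenFun; rw [if_neg (by omega), castk]
      rw [e0, e1, e2, if_pos rfl, castk]
      have hW := wronskian f₀ hf₀ne (k+1)
      have hcw : (Complex.I * ((k : ℂ) + 1) / (2 * ρ)) *
          (2 * Complex.I * ρ * (χ (k+1) / ((k : ℂ)+1))) = -χ (k+1) := by
        have hI : Complex.I * Complex.I = -1 := Complex.I_mul_I
        field_simp
        linear_combination hI
      linear_combination deltaCase (χ (k+1)) (Complex.I * ((k : ℂ) + 1) / (2 * ρ))
        (2 * Complex.I * ρ * (χ (k+1) / ((k : ℂ)+1))) (zetaSeq f₀ k) (zetaSeq f₀ (k+1))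
        (zetaSeq f₀ (k+2)) (f₀ (k+1)) (f₀ (k+2)) hc hrecD hW hcw
    · -- n < m
      have e0 : greenFun ρ χ f₀ m k =
          2 * Complex.I * ρ * (χ m / m) * (f₀ m * zetaSeq f₀ k) := by
        unfold greenFun; rw [if_pos (by omega)]
      have e1 : greenFun ρ χ f₀ m (k+1) =
          2 * Complex.I * ρ * (χ m / m) * (f₀ m * zetaSeq f₀ (k+1)) := by
        unfold greenFun; rw [if_pos (by omega)]
      have e2 : greenFun ρ χ f₀ m (k+1+1) =
          2 * Complex.I * ρ * (χ m / m) * (f₀ m * zetaSeq f₀ (k+2)) := by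
        unfold greenFun; rw [if_pos (by omega)]
      rw [e0, e1, e2, if_neg (by omega), castk]
      have hrec' : Complex.I * ((k : ℂ) + 1) / (2 * ρ) *
          (f₀ m * zetaSeq f₀ (k+2) + 2 * (f₀ m * zetaSeq f₀ (k+1)) + f₀ m * zetaSeq f₀ k) =
          (χ (k+1) - 1) * (f₀ m * zetaSeq f₀ (k+1)) := by
        linear_combination (f₀ m) * hrecD
      linear_combination homogCase (χ (k+1)) (Complex.I * ((k : ℂ) + 1) / (2 * ρ))
        (2 * Complex.I * ρ * (χ m / m)) (f₀ m * zetaSeq f₀ k) (f₀ m * zetaSeq f₀ (k+1))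
        (f₀ m * zetaSeq f₀ (k+2)) hc hrec'

end
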